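/- Let (f,A) be a continuous GL(d,ℝ)-cocycle over a homeomorphism f of a compact metric space X, and for κ > 0 define B⁺(A,κ) = {x ∈ X : ‖A_n(x)‖ ≤ κ and ‖A_n(x)⁻¹‖ ≤ κ for all n ∈ ℕ}. If x ∈ B⁺(A,κ), then for every y in the ω-limit set of x and every n ∈ ℤ, ‖A_n(y)‖ ≤ κ² and ‖A_n(y)⁻¹‖ ≤ κ². -/

import Mathlib

open Matrix

attribute [local instance] Matrix.linftyOpNormedAddCommGroup Matrix.linftyOpNormedRing

/-- The cocycle product `A_n(x) = A(f^{n-1}(x)) ⋯ A(f(x)) A(x)`. -/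
noncomputable def prodN {X : Type*} {d : ℕ} (f : X → X) (A : X → GL (Fin d) ℝ) :
    ℕ → X → GL (Fin d) ℝ
  | 0, _ => 1
  | n + 1, x => prodN f A n (f x) * A x

/-- The two-sided cocycle product: `A_n(x)` for `n ≥ 0` and
`A_{-n}(x) = (A_n(f^{-n}(x)))⁻¹` for `n ≥ 1`. -/
noncomputable def prodZ {X : Type*} [TopologicalSpace X] {d : ℕ} (f : X ≃ₜ X) (A : X → GL (Fin d) ℝ) :
    ℤ → X → GL (Fin d) ℝ
  | Int.ofNat n, x => prodN (⇑f) A n x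
  | Int.negSucc n, x => (prodN (⇑f) A (n + 1) ((⇑f.symm)^[n + 1] x))⁻¹

/-- Cocycle identity. -/
lemma prodN_add {X : Type*} {d : ℕ} (f : X → X) (A : X → GL (Fin d) ℝ) :
    ∀ (k n : ℕ) (x : X), prodN f A (n + k) x = prodN f A n (f^[k] x) * prodN f A k x
  | 0, n, x => by simp [prodN]
  | k + 1, n, x => by
    have h1 : n + (k + 1) = (n + k) + 1 := by ring
    rw [h1]
    show prodN f A (n + k) (f x) * A x = _
    rw [prodN_add f A k n (f x)]
    simp [prodN, Function.iterate_succ_apply, mul_assoc]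

lemma continuous_prodN {X : Type*} [TopologicalSpace X] {d : ℕ} (f : X ≃ₜ X)
    (A : X → GL (Fin d) ℝ) (hA : Continuous fun x => (A x : Matrix (Fin d) (Fin d) ℝ)) :
    ∀ n : ℕ, Continuous fun z => (prodN (⇑f) A n z : Matrix (Fin d) (Fin d) ℝ)
  | 0 => by simpa [prodN] using continuous_const
  | n + 1 => by
    have := (continuous_prodN f A hA n).comp f.continuous
    simpa [prodN, Units.val_mul, Pi.mul_def, Function.comp_def] using this.mul hA

lemma continuous_inv_of_continuous {X : Type*} [TopologicalSpace X] {d : ℕ}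
    (B : X → GL (Fin d) ℝ) (hB : Continuous fun x => (B x : Matrix (Fin d) (Fin d) ℝ)) :
    Continuous fun x => (((B x)⁻¹ : GL (Fin d) ℝ) : Matrix (Fin d) (Fin d) ℝ) := by
  have hdet : ∀ x, ((B x : Matrix (Fin d) (Fin d) ℝ)).det ≠ 0 := fun x =>
    ((Matrix.isUnit_iff_isUnit_det _).mp (B x).isUnit).ne_zero
  have : (fun x => (((B x)⁻¹ : GL (Fin d) ℝ) : Matrix (Fin d) (Fin d) ℝ)) =
      fun x => ((B x : Matrix (Fin d) (Fin d) ℝ).det)⁻¹ •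
        (B x : Matrix (Fin d) (Fin d) ℝ).adjugate := by
    funext x
    rw [Matrix.coe_units_inv, Matrix.inv_def, Ring.inverse_eq_inv]
  rw [this]
  exact (hB.matrix_det.inv₀ hdet).smul hB.matrix_adjugate

/-- if `x ∈ B⁺(A,κ)` (fiberwise bounded forward orbit), then for every `y`
in the ω-limit set of `x` and every `n : ℤ`, `‖A_n(y)‖ ≤ κ²` and `‖A_n(y)⁻¹‖ ≤ κ²`. -/
theorem bounded_omega_limit
    {X : Type*} [MetricSpace X] [CompactSpace X] {d : ℕ}
    (f : X ≃ₜ X) (A : X → GL (Fin d) ℝ)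
    (hA : Continuous fun x => (A x : Matrix (Fin d) (Fin d) ℝ))
    (κ : ℝ) (hκ : 0 < κ) (x : X)
    (hx : ∀ n : ℕ,
      ‖(prodN (⇑f) A n x : Matrix (Fin d) (Fin d) ℝ)‖ ≤ κ ∧
        ‖(((prodN (⇑f) A n x)⁻¹ : GL (Fin d) ℝ) : Matrix (Fin d) (Fin d) ℝ)‖ ≤ κ)
    (y : X)
    (hy : ∃ nj : ℕ → ℕ, StrictMono nj ∧
      Filter.Tendsto (fun j => (⇑f)^[nj j] x) Filter.atTop (nhds y)) :
    ∀ n : ℤ,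
      ‖(prodZ f A n y : Matrix (Fin d) (Fin d) ℝ)‖ ≤ κ ^ 2 ∧
        ‖(((prodZ f A n y)⁻¹ : GL (Fin d) ℝ) : Matrix (Fin d) (Fin d) ℝ)‖ ≤ κ ^ 2 := by
  obtain ⟨nj, hmono, hlim⟩ := hy
  -- pointwise bounds along the forward orbit
  have key : ∀ n k : ℕ,
      ‖(prodN (⇑f) A n ((⇑f)^[k] x) : Matrix (Fin d) (Fin d) ℝ)‖ ≤ κ ^ 2 ∧
      ‖(((prodN (⇑f) A n ((⇑f)^[k] x))⁻¹ : GL (Fin d) ℝ) : Matrix (Fin d) (Fin d) ℝ)‖ ≤ κ ^ 2 := by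
    intro n k
    have hco := prodN_add (⇑f) A k n x
    have h1 : prodN (⇑f) A n ((⇑f)^[k] x)
        = prodN (⇑f) A (n + k) x * (prodN (⇑f) A k x)⁻¹ :=
      eq_mul_inv_iff_mul_eq.mpr hco.symm
    constructor
    · rw [h1, Units.val_mul]
      calc ‖(prodN (⇑f) A (n + k) x : Matrix (Fin d) (Fin d) ℝ) *
              (((prodN (⇑f) A k x)⁻¹ : GL (Fin d) ℝ) : Matrix (Fin d) (Fin d) ℝ)‖
          ≤ ‖(prodN (⇑f) A (n + k) x : Matrix (Fin d) (Fin d) ℝ)‖ *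
              ‖(((prodN (⇑f) A k x)⁻¹ : GL (Fin d) ℝ) : Matrix (Fin d) (Fin d) ℝ)‖ :=
            norm_mul_le _ _
        _ ≤ κ * κ := mul_le_mul (hx (n + k)).1 (hx k).2 (norm_nonneg _) hκ.le
        _ = κ ^ 2 := (sq κ).symm
    · have h2 : (prodN (⇑f) A n ((⇑f)^[k] x))⁻¹
          = prodN (⇑f) A k x * (prodN (⇑f) A (n + k) x)⁻¹ := by
        rw [h1, _root_.mul_inv_rev, inv_inv]
      rw [h2, Units.val_mul]
      calc ‖(prodN (⇑f) A k x : Matrix (Fin d) (Fin d) ℝ) *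
              (((prodN (⇑f) A (n + k) x)⁻¹ : GL (Fin d) ℝ) : Matrix (Fin d) (Fin d) ℝ)‖
          ≤ ‖(prodN (⇑f) A k x : Matrix (Fin d) (Fin d) ℝ)‖ *
              ‖(((prodN (⇑f) A (n + k) x)⁻¹ : GL (Fin d) ℝ) : Matrix (Fin d) (Fin d) ℝ)‖ :=
            norm_mul_le _ _
        _ ≤ κ * κ := mul_le_mul (hx k).1 (hx (n + k)).2 (norm_nonneg _) hκ.le
        _ = κ ^ 2 := (sq κ).symm
  -- bounds persist at limits of points on the forward orbit
  have bound : ∀ (y' : X) (mj : ℕ → ℕ),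
      Filter.Tendsto (fun j => (⇑f)^[mj j] x) Filter.atTop (nhds y') → ∀ n : ℕ,
      ‖(prodN (⇑f) A n y' : Matrix (Fin d) (Fin d) ℝ)‖ ≤ κ ^ 2 ∧
      ‖(((prodN (⇑f) A n y')⁻¹ : GL (Fin d) ℝ) : Matrix (Fin d) (Fin d) ℝ)‖ ≤ κ ^ 2 := by
    intro y' mj hmj n
    constructor
    · exact le_of_tendsto (((continuous_prodN f A hA n).norm.tendsto y').comp hmj)
        (Filter.Eventually.of_forall fun j => (key n (mj j)).1)
    · exact le_of_tendsto
        (((continuous_inv_of_continuous _ (continuous_prodN f A hA n)).norm.tendsto y').comp hmj)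
        (Filter.Eventually.of_forall fun j => (key n (mj j)).2)
  intro n
  cases n with
  | ofNat n =>
    exact bound y nj hlim n
  | negSucc n =>
    set m := n + 1 with hm
    -- `f.symm^[m] y` is also a limit of points on the forward orbit
    have hLI : Function.LeftInverse (⇑f.symm) (⇑f) := f.symm_apply_apply
    have hiter : ∀ k, m ≤ k → (⇑f.symm)^[m] ((⇑f)^[k] x) = (⇑f)^[k - m] x := by
      intro k hk
      obtain ⟨j, rfl⟩ := Nat.exists_eq_add_of_le hk
      have h0 : (⇑f)^[m + j] x = (⇑f)^[m] ((⇑f)^[j] x) := Function.iterate_add_apply f m j x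
      rw [h0, (hLI.iterate m) ((⇑f)^[j] x)]
      congr 1
      omega
    have htend : Filter.Tendsto (fun j => (⇑f)^[nj (j + m) - m] x) Filter.atTop
        (nhds ((⇑f.symm)^[m] y)) := by
      have h1 : Filter.Tendsto (fun j => (⇑f.symm)^[m] ((⇑f)^[nj (j + m)] x)) Filter.atTop
          (nhds ((⇑f.symm)^[m] y)) := by
        refine ((f.symm.continuous.iterate m).tendsto y).comp ?_
        exact hlim.comp (Filter.tendsto_add_atTop_nat m)
      refine h1.congr fun j => ?_
      exact hiter (nj (j + m)) (le_trans (Nat.le_add_left m j) (hmono.le_apply))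
    have hb := bound ((⇑f.symm)^[m] y) _ htend m
    have hz : prodZ f A (Int.negSucc n) y = (prodN (⇑f) A m ((⇑f.symm)^[m] y))⁻¹ := rfl
    constructor
    · rw [hz]; exact hb.2
    · rw [hz, inv_inv]; exact hb.1
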